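/- For all a ∈ ℕ and all t ≥ a+1, the discounted sum of temporal-difference errors satisfies the exact identity Σ_{b=a}^{t−1} (γλ)^{b−a} δ_{a,b} = G_a^{λ|t} − u_a − Σ_{b=a}^{t−1} (γλ)^{b−a} (w_b − u_b) P(b,a). (The final sum is the correction term which is O(α) in the paper's setting, since w_b − u_b represents g(h_b;θ_b) − g(h_b;θ_{b−1}).) -/

import Mathlib

/-!
Splitting `w_b = u_b + (w_b - u_b)` turns each `δ_{a,b}` into `δ'_{a,b}` minus the correction
term, so it suffices to sum the `δ'_{a,b}`. These telescope: `G_a^{(n+1)} = G_a^{(n)} + γ^n δ'_{a,a+n}`,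
and hence extending the horizon of the λ-return by one step adds exactly `(γλ)^{t-a} δ'_{a,t}`,
starting from `G_a^{λ|a+1} = G_a^{(1)} = u_a + δ'_{a,a}`.
-/

open Finset Matrix

noncomputable section

/-- Propagator `Pfrom J a n = P(a+n, a) = J_{a+n-1} ⋯ J_a`. -/
def Pfrom {d : ℕ} (J : ℕ → Matrix (Fin d) (Fin d) ℝ) (a : ℕ) : ℕ → Matrix (Fin d) (Fin d) ℝ
  | 0 => 1
  | n + 1 => J (a + n) * Pfrom J a n

/-- Propagator `P J b a = P(b, a) = J_{b-1} ⋯ J_a` (for `b ≥ a`). -/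
def P {d : ℕ} (J : ℕ → Matrix (Fin d) (Fin d) ℝ) (b a : ℕ) : Matrix (Fin d) (Fin d) ℝ :=
  Pfrom J a (b - a)

/-- The n-step synthetic gradient `G_a^{(n)}`. -/
def Gn {d : ℕ} (γ : ℝ) (J : ℕ → Matrix (Fin d) (Fin d) ℝ) (c u : ℕ → Fin d → ℝ)
    (a n : ℕ) : Fin d → ℝ :=
  (∑ k ∈ Finset.range n, γ ^ k • Matrix.vecMul (c (a + k + 1)) (P J (a + k + 1) a))
    + γ ^ n • Matrix.vecMul (u (a + n)) (P J (a + n) a)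

/-- The interim λ-weighted synthetic gradient `G_a^{λ|H}`. -/
def GLam {d : ℕ} (γ lam : ℝ) (J : ℕ → Matrix (Fin d) (Fin d) ℝ) (c u : ℕ → Fin d → ℝ)
    (a H : ℕ) : Fin d → ℝ :=
  (1 - lam) • (∑ n ∈ Finset.range (H - a - 1), lam ^ n • Gn γ J c u a (n + 1))
    + lam ^ (H - a - 1) • Gn γ J c u a (H - a)

/-- The modified temporal-difference error `δ'_{a,t}`. -/
def δ' {d : ℕ} (γ : ℝ) (J : ℕ → Matrix (Fin d) (Fin d) ℝ) (c u : ℕ → Fin d → ℝ)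
    (a t : ℕ) : Fin d → ℝ :=
  Matrix.vecMul (c (t + 1) + γ • u (t + 1)) (P J (t + 1) a) - Matrix.vecMul (u t) (P J t a)

/-- The temporal-difference error `δ_t`. -/
def δtd {d : ℕ} (γ : ℝ) (J : ℕ → Matrix (Fin d) (Fin d) ℝ) (c u w : ℕ → Fin d → ℝ)
    (t : ℕ) : Fin d → ℝ :=
  Matrix.vecMul (c (t + 1) + γ • u (t + 1)) (P J (t + 1) t) - w t

/-- `δ_{a,t} = δ_t P(t,a)`. -/
def δab {d : ℕ} (γ : ℝ) (J : ℕ → Matrix (Fin d) (Fin d) ℝ) (c u w : ℕ → Fin d → ℝ)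
    (a t : ℕ) : Fin d → ℝ :=
  Matrix.vecMul (δtd γ J c u w t) (P J t a)

section

variable {d : ℕ} (γ lam : ℝ) (J : ℕ → Matrix (Fin d) (Fin d) ℝ) (c u w : ℕ → Fin d → ℝ)

theorem P_self (a : ℕ) : P J a a = 1 := by
  simp [P, Pfrom]

theorem P_succ_left {a b : ℕ} (hab : a ≤ b) : P J (b + 1) a = J b * P J b a := by
  rw [P, P, Nat.succ_sub hab, Pfrom, Nat.add_sub_cancel' hab]

theorem P_succ_self (b : ℕ) : P J (b + 1) b = J b := by
  rw [P_succ_left J le_rfl, P_self, mul_one]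

theorem δab_eq_δ'_sub {a b : ℕ} (hab : a ≤ b) :
    δab γ J c u w a b = δ' γ J c u a b - vecMul (w b - u b) (P J b a) := by
  rw [δab, δtd, δ', P_succ_self, sub_vecMul, sub_vecMul, vecMul_vecMul, ← P_succ_left J hab]
  abel

theorem Gn_zero (a : ℕ) : Gn γ J c u a 0 = u a := by
  simp [Gn, P_self]

theorem Gn_succ (a n : ℕ) :
    Gn γ J c u a (n + 1) = Gn γ J c u a n + γ ^ n • δ' γ J c u a (a + n) := by
  rw [Gn, Gn, δ', sum_range_succ, add_vecMul, smul_vecMul, ← add_assoc]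
  module

theorem GLam_succ_self (a : ℕ) : GLam γ lam J c u a (a + 1) = u a + δ' γ J c u a a := by
  simp only [GLam, Nat.add_sub_cancel_left, Nat.sub_self, range_zero, sum_empty, smul_zero,
    zero_add, pow_zero, one_smul, Gn_succ, Gn_zero, add_zero]

theorem GLam_succ {a t : ℕ} (hat : a < t) :
    GLam γ lam J c u a (t + 1) = GLam γ lam J c u a t + (γ * lam) ^ (t - a) • δ' γ J c u a t := by
  obtain ⟨n, rfl⟩ : ∃ n, t = a + (n + 1) := ⟨t - a - 1, by omega⟩
  have h₁ : a + (n + 1) + 1 - a - 1 = n + 1 := by omega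
  have h₂ : a + (n + 1) + 1 - a = n + 1 + 1 := by omega
  have h₃ : a + (n + 1) - a - 1 = n := by omega
  rw [GLam, GLam, h₁, h₂, h₃, Nat.add_sub_cancel_left, sum_range_succ, Gn_succ γ J c u a (n + 1)]
  module

theorem sum_discounted_δ' {a t : ℕ} (hat : a ≤ t) :
    ∑ b ∈ Icc a t, (γ * lam) ^ (b - a) • δ' γ J c u a b = GLam γ lam J c u a (t + 1) - u a := by
  induction t, hat using Nat.le_induction with
  | base => simp [GLam_succ_self]
  | succ t hat ih =>
    rw [sum_Icc_succ_top (by omega), ih, GLam_succ γ lam J c u (by omega : a < t + 1)]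
    abel

end

/-- exact identity for the discounted sum of temporal-difference
errors, with the O(α) correction term made explicit:
`Σ_{b=a}^{t−1} (γλ)^{b−a} δ_{a,b} = G_a^{λ|t} − u_a − Σ_{b=a}^{t−1} (γλ)^{b−a} (w_b − u_b) P(b,a)`. -/
theorem discounted_td_with_correction {d : ℕ} (γ lam : ℝ)
    (J : ℕ → Matrix (Fin d) (Fin d) ℝ) (c u w : ℕ → Fin d → ℝ)
    (a t : ℕ) (h : a + 1 ≤ t) :
    ∑ b ∈ Finset.Icc a (t - 1), (γ * lam) ^ (b - a) • δab γ J c u w a b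
      = GLam γ lam J c u a t - u a
        - ∑ b ∈ Finset.Icc a (t - 1), (γ * lam) ^ (b - a) • Matrix.vecMul (w b - u b) (P J b a) := by
  have hsplit : ∀ b ∈ Icc a (t - 1), (γ * lam) ^ (b - a) • δab γ J c u w a b
      = (γ * lam) ^ (b - a) • δ' γ J c u a b
        - (γ * lam) ^ (b - a) • vecMul (w b - u b) (P J b a) := fun b hb ↦ by
    rw [δab_eq_δ'_sub γ J c u w (mem_Icc.mp hb).1, smul_sub]
  rw [sum_congr rfl hsplit, sum_sub_distrib, sum_discounted_δ' γ lam J c u (by omega),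
    Nat.sub_add_cancel (by omega)]

end
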